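/- arXiv:1402.1865 — 2 statements merged into one kernel-verified Lean document; each statement's English description precedes it below -/
import Mathlib

section
/- For every j₁, j₂ ∈ {0,1,2,3} and every α ∈ R there exist ℓ ∈ ℕ, digits c_0, …, c_{ℓ−1} ∈ D̃(j₁,j₂) with at least one of c_i, c_{i+1} equal to 0 for every i with 0 ≤ i ≤ ℓ−2, and an element β ∈ R with Q(β) ≤ 20, such that α = Σ_{i=0}^{ℓ−1} c_i·τ^i + τ^ℓ·β in R. -/
/-!
The roots of `p` are `z, z̄, w, w̄` with `|z|² = |w|² = 2`, coming from the real factorization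
`p = (X² + r₊X + 2)(X² + r₋X + 2)`, `r± = (-μ ± √17)/2`. Hence `Q(α) = |α(z)|² + |α(w)|²`, so `√Q`
is a seminorm on `R`, `Q(τβ) = 2 Q(β)`, and `2Q` is an explicit integral quadratic form in the
coordinates of `α` on `1, τ, τ², τ³`.

Argue by strong induction on `2Q(α) ∈ ℕ`. If `Q(α) ≤ 20` take `ℓ = 0`. If `τ ∣ α`, write `α = τβ`
and emit the digit `0`. Otherwise `α ≡ d (mod τ²)` for some `d ∈ D̃`: the digits represent the
twelve residue classes modulo `τ²` outside `τR`, whatever the signs `j₁, j₂` select. Then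
`α = d + τ²β` with `2√Q(β) = √Q(α - d) ≤ √Q(α) + √Q(d) < 2√Q(α)`, as every digit has
`Q(d) ≤ 20 < Q(α)`; emit the digits `d, 0`.
-/

open Polynomial ComplexConjugate

noncomputable def P (μ : ℤ) : ℤ[X] := X ^ 4 - C μ * X ^ 3 - C (2 * μ) * X + 4

noncomputable abbrev Rg (μ : ℤ) := AdjoinRoot (P μ)

noncomputable def tau (μ : ℤ) : Rg μ := AdjoinRoot.root (P μ)

noncomputable def Dtil (μ : ℤ) (j₁ j₂ : ℕ) : Set (Rg μ) :=
  {0, 1, -1, 2, -2, 1 + tau μ, 1 - tau μ, -1 + tau μ, -1 - tau μ,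
   (-1 : Rg μ) ^ (j₁ / 2) * (2 + tau μ), (-1 : Rg μ) ^ j₁ * (2 - tau μ),
   1 + 2 * (μ : Rg μ) * (-1 : Rg μ) ^ (j₂ / 2) * tau μ,
   -1 + 2 * (μ : Rg μ) * (-1 : Rg μ) ^ j₂ * tau μ}

noncomputable def Q (μ : ℤ) (α : Rg μ) : ℝ :=
  (1 / 2) * (((P μ).map (Int.castRingHom ℂ)).roots.attach.map
    (fun z => ‖AdjoinRoot.lift (Int.castRingHom ℂ) z.1
      (by
        have h2 : Polynomial.eval z.1 ((P μ).map (Int.castRingHom ℂ)) = 0 :=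
          (Polynomial.mem_roots'.mp z.2).2
        rwa [Polynomial.eval_map] at h2) α‖ ^ 2)).sum

variable {μ : ℤ}

lemma tau_pow_four (μ : ℤ) : tau μ ^ 4 = μ * tau μ ^ 3 + 2 * μ * tau μ - 4 := by
  have h : AdjoinRoot.mk (P μ) (X ^ 4 - C μ * X ^ 3 - C (2 * μ) * X + 4) = 0 :=
    AdjoinRoot.mk_self
  simp only [map_add, map_sub, map_mul, map_pow, AdjoinRoot.mk_X, map_ofNat, eq_intCast] at h
  change tau μ ^ 4 - μ * tau μ ^ 3 - 2 * μ * tau μ + 4 = 0 at h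
  linear_combination h

lemma exists_coords (α : Rg μ) :
    ∃ a b c d : ℤ, α = a + b * tau μ + c * tau μ ^ 2 + d * tau μ ^ 3 := by
  have hmonic : (P μ).Monic := by unfold P; monicity!
  have hdeg : (P μ).natDegree = 4 := by unfold P; compute_degree!
  let B := AdjoinRoot.powerBasis' hmonic
  have hdim : B.dim = 4 := hdeg
  have h := B.basis.sum_repr α
  rw [← Fin.sum_congr' _ hdim.symm, Fin.sum_univ_four] at h
  refine ⟨B.basis.repr α (Fin.cast hdim.symm 0), B.basis.repr α (Fin.cast hdim.symm 1),
    B.basis.repr α (Fin.cast hdim.symm 2), B.basis.repr α (Fin.cast hdim.symm 3), ?_⟩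
  conv_lhs => rw [← h]
  simp [B, PowerBasis.coe_basis, zsmul_eq_mul, tau]

lemma tau_dvd_four (μ : ℤ) : tau μ ∣ (4 : Rg μ) :=
  ⟨μ * tau μ ^ 2 + 2 * μ - tau μ ^ 3, by linear_combination tau_pow_four μ⟩

lemma tau_sq_dvd_four_mul_tau (μ : ℤ) : tau μ ^ 2 ∣ 4 * tau μ := by
  rw [sq, mul_comm 4]
  exact mul_dvd_mul_left _ (tau_dvd_four μ)

lemma tau_sq_dvd_four_sub_two_mul_tau (hμ : μ = 1 ∨ μ = -1) : tau μ ^ 2 ∣ 4 - 2 * tau μ := by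
  have h : tau μ ^ 2 ∣ 4 - 2 * μ * tau μ :=
    ⟨μ * tau μ - tau μ ^ 2, by linear_combination tau_pow_four μ⟩
  rcases hμ with rfl | rfl
  · simpa using h
  · convert dvd_sub h (tau_sq_dvd_four_mul_tau (-1)) using 1
    push_cast
    ring

lemma tau_sq_dvd_four_add_two_mul_tau (hμ : μ = 1 ∨ μ = -1) : tau μ ^ 2 ∣ 4 + 2 * tau μ := by
  convert dvd_add (tau_sq_dvd_four_sub_two_mul_tau hμ) (tau_sq_dvd_four_mul_tau μ) using 1
  ring

lemma tau_sq_dvd_of_four_dvd_of_eight_dvd (hμ : μ = 1 ∨ μ = -1) {x y : ℤ} (hx : 4 ∣ x)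
    (hxy : 8 ∣ x + 2 * y) : tau μ ^ 2 ∣ (x : Rg μ) + y * tau μ := by
  obtain ⟨k, rfl⟩ := hx
  obtain ⟨m, rfl⟩ : ∃ m, y = 4 * m - 2 * k := ⟨(y + 2 * k) / 4, by omega⟩
  have h : ((4 * k : ℤ) : Rg μ) + ((4 * m - 2 * k : ℤ) : Rg μ) * tau μ =
      k * (4 - 2 * tau μ) + m * (4 * tau μ) := by
    push_cast
    ring
  rw [h]
  exact dvd_add (dvd_mul_of_dvd_right (tau_sq_dvd_four_sub_two_mul_tau hμ) _)
    (dvd_mul_of_dvd_right (tau_sq_dvd_four_mul_tau μ) _)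

/-- The root of `X ^ 2 + r * X + 2` in the upper half plane (when `r ^ 2 ≤ 8`). -/
noncomputable def quadRoot (r : ℝ) : ℂ := ⟨-r / 2, √(8 - r ^ 2) / 2⟩

lemma quadRoot_add_conj (r : ℝ) : quadRoot r + conj (quadRoot r) = -r := by
  apply Complex.ext <;> simp [quadRoot]

lemma quadRoot_mul_conj {r : ℝ} (hr : r ^ 2 ≤ 8) : quadRoot r * conj (quadRoot r) = 2 := by
  rw [Complex.mul_conj, Complex.normSq_apply]
  simp only [quadRoot]
  have := Real.sq_sqrt (sub_nonneg.mpr hr)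
  norm_cast
  nlinarith

lemma norm_quadRoot_sq {r : ℝ} (hr : r ^ 2 ≤ 8) : ‖quadRoot r‖ ^ 2 = 2 := by
  rw [← Complex.ofReal_inj, Complex.ofReal_pow, ← Complex.mul_conj', quadRoot_mul_conj hr]
  norm_num

lemma map_P_eq_mul {r t : ℝ} (hsum : r + t = -μ) (hprod : r * t = -4) (hr : r ^ 2 ≤ 8)
    (ht : t ^ 2 ≤ 8) :
    (P μ).map (Int.castRingHom ℂ) = (X - C (quadRoot r)) * (X - C (conj (quadRoot r))) *
      ((X - C (quadRoot t)) * (X - C (conj (quadRoot t)))) := by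
  have quad : ∀ {s : ℝ}, s ^ 2 ≤ 8 →
      (X - C (quadRoot s)) * (X - C (conj (quadRoot s))) = X ^ 2 + C (s : ℂ) * X + 2 := by
    intro s hs
    have h₁ := congrArg C (quadRoot_add_conj s)
    have h₂ := congrArg C (quadRoot_mul_conj hs)
    simp only [C_add, C_mul, C_neg, C_ofNat] at h₁ h₂
    linear_combination (-X) * h₁ + h₂
  have hsum' := congrArg C (congrArg ((↑) : ℝ → ℂ) hsum)
  have hprod' := congrArg C (congrArg ((↑) : ℝ → ℂ) hprod)
  push_cast at hsum' hprod'
  simp only [C_add, C_mul, C_neg, C_ofNat, C_eq_intCast] at hsum' hprod'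
  rw [quad hr, quad ht]
  simp only [P, Polynomial.map_add, Polynomial.map_sub, Polynomial.map_mul, Polynomial.map_pow,
    map_X, Polynomial.map_ofNat, eq_intCast, Polynomial.map_intCast]
  push_cast
  linear_combination (-X ^ 3 - 2 * X) * hsum' - X ^ 2 * hprod'

/-- With `rMinus`, the coefficients of the real factorization
`P μ = (X ^ 2 + rPlus μ * X + 2) * (X ^ 2 + rMinus μ * X + 2)`. -/
noncomputable def rPlus (μ : ℤ) : ℝ := (-μ + √17) / 2

noncomputable def rMinus (μ : ℤ) : ℝ := (-μ - √17) / 2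

lemma rPlus_add_rMinus (μ : ℤ) : rPlus μ + rMinus μ = -μ := by
  simp only [rPlus, rMinus]
  ring

section
variable (hμ : μ = 1 ∨ μ = -1)
include hμ

lemma rPlus_mul_rMinus : rPlus μ * rMinus μ = -4 := by
  have h := Real.sq_sqrt (show (0 : ℝ) ≤ 17 by norm_num)
  rcases hμ with rfl | rfl <;> simp only [rPlus, rMinus] <;> push_cast <;>
    linear_combination -h / 4

lemma rPlus_sq_le : rPlus μ ^ 2 ≤ 8 := by
  have h := Real.sq_sqrt (show (0 : ℝ) ≤ 17 by norm_num)
  have h0 := Real.sqrt_nonneg 17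
  rcases hμ with rfl | rfl <;> simp only [rPlus] <;> push_cast <;> nlinarith

lemma rMinus_sq_le : rMinus μ ^ 2 ≤ 8 := by
  have h := Real.sq_sqrt (show (0 : ℝ) ≤ 17 by norm_num)
  have h0 := Real.sqrt_nonneg 17
  rcases hμ with rfl | rfl <;> simp only [rMinus] <;> push_cast <;> nlinarith

lemma roots_map_P :
    ((P μ).map (Int.castRingHom ℂ)).roots = {quadRoot (rPlus μ), conj (quadRoot (rPlus μ)),
      quadRoot (rMinus μ), conj (quadRoot (rMinus μ))} := by
  rw [map_P_eq_mul (rPlus_add_rMinus μ) (rPlus_mul_rMinus hμ) (rPlus_sq_le hμ) (rMinus_sq_le hμ)]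
  simp [roots_mul, X_sub_C_ne_zero, Multiset.insert_eq_cons, Multiset.cons_swap]

end

lemma eval₂_P_eq_zero {z : ℂ} (hz : z ∈ ((P μ).map (Int.castRingHom ℂ)).roots) :
    (P μ).eval₂ (Int.castRingHom ℂ) z = 0 := by
  rw [← eval_map]
  exact (mem_roots'.mp hz).2

noncomputable def rootEmbedding {z : ℂ} (hz : z ∈ ((P μ).map (Int.castRingHom ℂ)).roots) :
    Rg μ →+* ℂ :=
  AdjoinRoot.lift (Int.castRingHom ℂ) z (eval₂_P_eq_zero hz)

@[simp]
lemma rootEmbedding_tau {z : ℂ} (hz : z ∈ ((P μ).map (Int.castRingHom ℂ)).roots) :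
    rootEmbedding hz (tau μ) = z :=
  AdjoinRoot.lift_root _

lemma rootEmbedding_conj {z : ℂ} (hz : z ∈ ((P μ).map (Int.castRingHom ℂ)).roots)
    (hz' : conj z ∈ ((P μ).map (Int.castRingHom ℂ)).roots) (α : Rg μ) :
    rootEmbedding hz' α = conj (rootEmbedding hz α) := by
  induction α using AdjoinRoot.induction_on with
  | ih g =>
    simp only [rootEmbedding, AdjoinRoot.lift_mk, hom_eval₂]
    congr
    exact RingHom.ext_int _ _

lemma Q_eq_sum_map_roots (α : Rg μ) :
    Q μ α = 1 / 2 * (((P μ).map (Int.castRingHom ℂ)).roots.map fun z =>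
      if hz : z ∈ ((P μ).map (Int.castRingHom ℂ)).roots then ‖rootEmbedding hz α‖ ^ 2
      else 0).sum := by
  rw [Q]
  congr 2
  conv_rhs => rw [← Multiset.attach_map_val']
  refine Multiset.map_congr rfl ?_
  rintro ⟨z, hz⟩ -
  simp only [dif_pos hz]
  rfl

lemma Q_nonneg (α : Rg μ) : 0 ≤ Q μ α := by
  rw [Q_eq_sum_map_roots]
  refine mul_nonneg (by norm_num) (Multiset.sum_nonneg fun x hx => ?_)
  obtain ⟨z, -, rfl⟩ := Multiset.mem_map.mp hx
  split_ifs <;> positivity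

section
variable (hμ : μ = 1 ∨ μ = -1)
include hμ

lemma quadRoot_rPlus_mem : quadRoot (rPlus μ) ∈ ((P μ).map (Int.castRingHom ℂ)).roots := by
  simp [roots_map_P hμ]

lemma quadRoot_rMinus_mem : quadRoot (rMinus μ) ∈ ((P μ).map (Int.castRingHom ℂ)).roots := by
  simp [roots_map_P hμ]

lemma conj_quadRoot_rPlus_mem :
    conj (quadRoot (rPlus μ)) ∈ ((P μ).map (Int.castRingHom ℂ)).roots := by
  simp [roots_map_P hμ]

lemma conj_quadRoot_rMinus_mem :
    conj (quadRoot (rMinus μ)) ∈ ((P μ).map (Int.castRingHom ℂ)).roots := by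
  simp [roots_map_P hμ]

lemma Q_eq (α : Rg μ) :
    Q μ α = ‖rootEmbedding (quadRoot_rPlus_mem hμ) α‖ ^ 2 +
      ‖rootEmbedding (quadRoot_rMinus_mem hμ) α‖ ^ 2 := by
  rw [Q_eq_sum_map_roots]
  set g := fun z => if hz : z ∈ ((P μ).map (Int.castRingHom ℂ)).roots then
    ‖rootEmbedding hz α‖ ^ 2 else 0 with hg
  rw [roots_map_P hμ]
  simp only [hg, Multiset.insert_eq_cons, Multiset.map_cons, Multiset.map_singleton,
    Multiset.sum_cons, Multiset.sum_singleton, dif_pos (quadRoot_rPlus_mem hμ),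
    dif_pos (quadRoot_rMinus_mem hμ), dif_pos (conj_quadRoot_rPlus_mem hμ),
    dif_pos (conj_quadRoot_rMinus_mem hμ)]
  rw [rootEmbedding_conj (quadRoot_rPlus_mem hμ), rootEmbedding_conj (quadRoot_rMinus_mem hμ),
    Complex.norm_conj, Complex.norm_conj]
  ring

lemma Q_tau_mul (β : Rg μ) : Q μ (tau μ * β) = 2 * Q μ β := by
  simp only [Q_eq hμ, map_mul, rootEmbedding_tau, norm_mul, mul_pow,
    norm_quadRoot_sq (rPlus_sq_le hμ), norm_quadRoot_sq (rMinus_sq_le hμ)]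
  ring

lemma sqrt_Q_sub_le (α β : Rg μ) : √(Q μ (α - β)) ≤ √(Q μ α) + √(Q μ β) := by
  let v : Rg μ → WithLp 2 (ℂ × ℂ) := fun x => WithLp.toLp 2
    (rootEmbedding (quadRoot_rPlus_mem hμ) x, rootEmbedding (quadRoot_rMinus_mem hμ) x)
  have hv : ∀ x, √(Q μ x) = ‖v x‖ := fun x => by
    rw [Q_eq hμ, WithLp.prod_norm_eq_of_L2]
    rfl
  have hsub : v (α - β) = v α - v β := by simp [v, map_sub, ← WithLp.toLp_sub]
  rw [hv, hv, hv, hsub]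
  exact norm_sub_le _ _

lemma Q_lt_Q_add_tau_sq_mul {d β : Rg μ} (hd : Q μ d ≤ 20) (hα : 20 < Q μ (d + tau μ ^ 2 * β)) :
    Q μ β < Q μ (d + tau μ ^ 2 * β) := by
  set α := d + tau μ ^ 2 * β
  have h4 : Q μ (α - d) = 2 ^ 2 * Q μ β := by
    rw [show α - d = tau μ * (tau μ * β) by ring, Q_tau_mul hμ, Q_tau_mul hμ]
    ring
  have hsqrt : √(Q μ (α - d)) = 2 * √(Q μ β) := by
    rw [h4, Real.sqrt_mul (by norm_num), Real.sqrt_sq (by norm_num)]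
  have hd' : √(Q μ d) < √(Q μ α) := Real.sqrt_lt_sqrt (Q_nonneg d) (hd.trans_lt hα)
  have := sqrt_Q_sub_le hμ α d
  have : √(Q μ β) < √(Q μ α) := by linarith
  exact (Real.sqrt_lt_sqrt_iff (Q_nonneg β)).mp this

end

lemma cubic_mul_cubic {R : Type*} [CommRing R] {z z' r : R} (hsum : z + z' = -r)
    (hprod : z * z' = 2) (a b c d : R) :
    (a + b * z + c * z ^ 2 + d * z ^ 3) * (a + b * z' + c * z' ^ 2 + d * z' ^ 3) =
      a ^ 2 + 2 * b ^ 2 + 4 * c ^ 2 + 8 * d ^ 2 - r * (a * b + 2 * b * c + 4 * c * d)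
        + (r ^ 2 - 4) * (a * c + 2 * b * d) + (6 * r - r ^ 3) * (a * d) := by
  obtain rfl : z' = -r - z := by linear_combination hsum
  have hz : z ^ 2 = -r * z - 2 := by linear_combination -hprod
  linear_combination ((-4) * d ^ 2 + 2 * d ^ 2 * z ^ 2 - d ^ 2 * z ^ 4 + 2 * d ^ 2 * r * z
    - 2 * d ^ 2 * r * z ^ 3 - d ^ 2 * r ^ 2 * z ^ 2 + 2 * c * d * r - c * d * r * z ^ 2
    - c * d * r ^ 2 * z - 2 * c ^ 2 + c ^ 2 * z ^ 2 + c ^ 2 * r * z + 4 * b * d - 2 * b * d * z ^ 2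
    - 2 * b * d * r * z - b * d * r ^ 2 + b * c * r - b ^ 2 - 3 * a * d * r + 2 * a * c) * hz

lemma norm_cubic_quadRoot_sq {r : ℝ} (hr : r ^ 2 ≤ 8) (a b c d : ℝ) :
    ‖a + b * quadRoot r + c * quadRoot r ^ 2 + d * quadRoot r ^ 3‖ ^ 2 =
      a ^ 2 + 2 * b ^ 2 + 4 * c ^ 2 + 8 * d ^ 2 - r * (a * b + 2 * b * c + 4 * c * d)
        + (r ^ 2 - 4) * (a * c + 2 * b * d) + (6 * r - r ^ 3) * (a * d) := by
  rw [← Complex.ofReal_inj, Complex.ofReal_pow, ← Complex.mul_conj']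
  simp only [map_add, map_mul, map_pow, Complex.conj_ofReal]
  rw [cubic_mul_cubic (quadRoot_add_conj r) (quadRoot_mul_conj hr)]
  push_cast
  ring

def quadForm (μ a b c d : ℤ) : ℤ :=
  4 * a ^ 2 + 8 * b ^ 2 + 16 * c ^ 2 + 32 * d ^ 2 + 2 * μ * (a * b + 2 * b * c + 4 * c * d)
    + 2 * (a * c + 2 * b * d) + 14 * μ * (a * d)

section
variable (hμ : μ = 1 ∨ μ = -1)
include hμ

lemma two_mul_Q_coords (a b c d : ℤ) :
    2 * Q μ (a + b * tau μ + c * tau μ ^ 2 + d * tau μ ^ 3) = quadForm μ a b c d := by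
  have hμ2 : (μ : ℝ) ^ 2 = 1 := by rcases hμ with rfl | rfl <;> norm_num
  have hsum := rPlus_add_rMinus μ
  have hprod := rPlus_mul_rMinus hμ
  simp only [Q_eq hμ, map_add, map_mul, map_pow, map_intCast, rootEmbedding_tau]
  have e : ∀ n : ℤ, (n : ℂ) = ((n : ℝ) : ℂ) := fun n => by simp
  simp only [e, norm_cubic_quadRoot_sq (rPlus_sq_le hμ), norm_cubic_quadRoot_sq (rMinus_sq_le hμ)]
  generalize rPlus μ = r, rMinus μ = t at hsum hprod ⊢
  obtain rfl : t = -μ - r := by linear_combination hsum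
  have hr : r ^ 2 = -μ * r + 4 := by linear_combination -hprod
  simp only [quadForm]
  push_cast
  linear_combination (2 * (4 * (b : ℝ) * d + 3 * a * d * μ + 2 * a * c)) * hr
    + (2 * (2 * (b : ℝ) * d + a * d * μ + a * c)) * hμ2

lemma exists_nat_eq_two_mul_Q (α : Rg μ) : ∃ n : ℕ, 2 * Q μ α = n := by
  obtain ⟨a, b, c, d, rfl⟩ := exists_coords α
  have h := two_mul_Q_coords hμ a b c d
  have h0 : (0 : ℝ) ≤ quadForm μ a b c d := h ▸ mul_nonneg zero_le_two (Q_nonneg _)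
  lift quadForm μ a b c d to ℕ using (by exact_mod_cast h0) with n
  exact ⟨n, mod_cast h⟩

lemma Q_add_mul_tau_le {a b : ℤ} (h : a ^ 2 + b ^ 2 ≤ 5) : Q μ (a + b * tau μ) ≤ 20 := by
  have hQ := two_mul_Q_coords hμ a b 0 0
  simp only [Int.cast_zero, zero_mul, add_zero] at hQ
  suffices quadForm μ a b 0 0 ≤ 40 by
    have : (quadForm μ a b 0 0 : ℝ) ≤ 40 := by exact_mod_cast this
    linarith
  have ha₁ : -2 ≤ a := by nlinarith
  have ha₂ : a ≤ 2 := by nlinarith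
  have hb₁ : -2 ≤ b := by nlinarith
  have hb₂ : b ≤ 2 := by nlinarith
  rcases hμ with rfl | rfl <;> interval_cases a <;> interval_cases b <;> simp_all [quadForm]

lemma Q_le_twenty_of_mem_Dtil {j₁ j₂ : ℕ} {d : Rg μ} (hd : d ∈ Dtil μ j₁ j₂) : Q μ d ≤ 20 := by
  have sign : ∀ n : ℕ, ∃ s : ℤ, s ^ 2 = 1 ∧ (-1 : Rg μ) ^ n = s := fun n =>
    ⟨(-1) ^ n, by rw [← pow_mul, mul_comm, pow_mul]; simp, by push_cast; rfl⟩
  obtain ⟨s₁, hs₁, e₁⟩ := sign (j₁ / 2)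
  obtain ⟨s₂, hs₂, e₂⟩ := sign j₁
  obtain ⟨s₃, hs₃, e₃⟩ := sign (j₂ / 2)
  obtain ⟨s₄, hs₄, e₄⟩ := sign j₂
  have hμ2 : μ ^ 2 = 1 := by rcases hμ with rfl | rfl <;> norm_num
  obtain ⟨a, b, hab, rfl⟩ : ∃ a b : ℤ, a ^ 2 + b ^ 2 ≤ 5 ∧ d = a + b * tau μ := by
    simp only [Dtil, Set.mem_insert_iff, Set.mem_singleton_iff, e₁, e₂, e₃, e₄] at hd
    rcases hd with rfl | rfl | rfl | rfl | rfl | rfl | rfl | rfl | rfl | rfl | rfl | rfl | rfl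
    exacts [⟨0, 0, by norm_num, by simp⟩, ⟨1, 0, by norm_num, by simp⟩,
      ⟨-1, 0, by norm_num, by simp⟩, ⟨2, 0, by norm_num, by simp⟩, ⟨-2, 0, by norm_num, by simp⟩,
      ⟨1, 1, by norm_num, by simp⟩, ⟨1, -1, by norm_num, by simp; ring⟩,
      ⟨-1, 1, by norm_num, by simp⟩, ⟨-1, -1, by norm_num, by simp; ring⟩,
      ⟨2 * s₁, s₁, by nlinarith, by push_cast; ring⟩,
      ⟨2 * s₂, -s₂, by nlinarith, by push_cast; ring⟩,
      ⟨1, 2 * μ * s₃, by nlinarith, by push_cast; ring⟩,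
      ⟨-1, 2 * μ * s₄, by nlinarith, by push_cast; ring⟩]
  exact Q_add_mul_tau_le hμ hab

end

lemma dvd_sub_mul_self_of_dvd_two_mul {R : Type*} [CommRing R] {t x u : R}
    (hu : u = 1 ∨ u = -1) (h : t ∣ 2 * x) : t ∣ x - u * x := by
  rcases hu with rfl | rfl
  · simp
  · convert h using 1
    ring

/-- A pair `(d₁, d₂)` stands for `d₁ + d₂ * τ`. These twelve elements represent the residue
classes modulo `τ ^ 2` that do not lie in `τ * R`. -/
def basePairs : List (ℤ × ℤ) :=
  [(1, 0), (1, 1), (1, 2), (1, -1), (2, -1), (2, 0), (2, 1), (-2, 0), (-1, 1), (-1, 2), (-1, -1),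
    (-1, 0)]

lemma exists_mem_basePairs {a b : ℤ} (ha : ¬ 4 ∣ a) :
    ∃ p ∈ basePairs, 4 ∣ a - p.1 ∧ 8 ∣ a - p.1 + 2 * (b - p.2) := by
  obtain h | h | h : a % 4 = 1 ∨ a % 4 = 2 ∨ a % 4 = 3 := by omega
  · obtain h' | h' | h' | h' : (a + 2 * b) % 8 = 1 ∨ (a + 2 * b) % 8 = 3 ∨
        (a + 2 * b) % 8 = 5 ∨ (a + 2 * b) % 8 = 7 := by omega
    exacts [⟨(1, 0), by simp [basePairs], by omega, by omega⟩,
      ⟨(1, 1), by simp [basePairs], by omega, by omega⟩,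
      ⟨(1, 2), by simp [basePairs], by omega, by omega⟩,
      ⟨(1, -1), by simp [basePairs], by omega, by omega⟩]
  · obtain h' | h' | h' | h' : (a + 2 * b) % 8 = 0 ∨ (a + 2 * b) % 8 = 2 ∨
        (a + 2 * b) % 8 = 4 ∨ (a + 2 * b) % 8 = 6 := by omega
    exacts [⟨(2, -1), by simp [basePairs], by omega, by omega⟩,
      ⟨(2, 0), by simp [basePairs], by omega, by omega⟩,
      ⟨(2, 1), by simp [basePairs], by omega, by omega⟩,
      ⟨(-2, 0), by simp [basePairs], by omega, by omega⟩]
  · obtain h' | h' | h' | h' : (a + 2 * b) % 8 = 1 ∨ (a + 2 * b) % 8 = 3 ∨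
        (a + 2 * b) % 8 = 5 ∨ (a + 2 * b) % 8 = 7 := by omega
    exacts [⟨(-1, 1), by simp [basePairs], by omega, by omega⟩,
      ⟨(-1, 2), by simp [basePairs], by omega, by omega⟩,
      ⟨(-1, -1), by simp [basePairs], by omega, by omega⟩,
      ⟨(-1, 0), by simp [basePairs], by omega, by omega⟩]

section
variable (hμ : μ = 1 ∨ μ = -1)
include hμ

lemma forall_mem_basePairs_exists_mem_Dtil (j₁ j₂ : ℕ) :
    ∀ p ∈ basePairs, ∃ d ∈ Dtil μ j₁ j₂, tau μ ^ 2 ∣ (p.1 : Rg μ) + p.2 * tau μ - d := by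
  have hμ' : (μ : Rg μ) = 1 ∨ (μ : Rg μ) = -1 := by rcases hμ with rfl | rfl <;> simp
  have hsign : ∀ n, (μ : Rg μ) * (-1) ^ n = 1 ∨ (μ : Rg μ) * (-1) ^ n = -1 := fun n => by
    rcases hμ' with h | h <;> rcases neg_one_pow_eq_or (Rg μ) n with h' | h' <;> simp [h, h']
  -- The signs in `Dtil` are invisible modulo `τ ^ 2`, which divides `2 * (2 ± τ)` and `4 * τ`.
  have h₁ : tau μ ^ 2 ∣ 2 + tau μ - (-1) ^ (j₁ / 2) * (2 + tau μ) :=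
    dvd_sub_mul_self_of_dvd_two_mul (neg_one_pow_eq_or _ _) <| by
      convert tau_sq_dvd_four_add_two_mul_tau hμ using 1; ring
  have h₂ : tau μ ^ 2 ∣ 2 - tau μ - (-1) ^ j₁ * (2 - tau μ) :=
    dvd_sub_mul_self_of_dvd_two_mul (neg_one_pow_eq_or _ _) <| by
      convert tau_sq_dvd_four_sub_two_mul_tau hμ using 1; ring
  have h₃ : tau μ ^ 2 ∣ 1 + 2 * tau μ - (1 + 2 * μ * (-1) ^ (j₂ / 2) * tau μ) := by
    have := dvd_sub_mul_self_of_dvd_two_mul (hsign (j₂ / 2)) (x := 2 * tau μ) <| by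
      convert tau_sq_dvd_four_mul_tau μ using 1; ring
    convert this using 1; ring
  have h₄ : tau μ ^ 2 ∣ -1 + 2 * tau μ - (-1 + 2 * μ * (-1) ^ j₂ * tau μ) := by
    have := dvd_sub_mul_self_of_dvd_two_mul (hsign j₂) (x := 2 * tau μ) <| by
      convert tau_sq_dvd_four_mul_tau μ using 1; ring
    convert this using 1; ring
  simp only [basePairs, List.forall_mem_cons, List.not_mem_nil, IsEmpty.forall_iff, implies_true,
    and_true]
  push_cast
  refine ⟨⟨1, by simp [Dtil], by simp⟩, ⟨1 + tau μ, by simp [Dtil], by simp⟩,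
    ⟨_, by simp [Dtil], h₃⟩, ⟨1 - tau μ, by simp [Dtil], by simp⟩,
    ⟨(-1) ^ j₁ * (2 - tau μ), by simp [Dtil], by simpa [sub_eq_add_neg] using h₂⟩,
    ⟨2, by simp [Dtil], by simp⟩,
    ⟨(-1) ^ (j₁ / 2) * (2 + tau μ), by simp [Dtil], by simpa using h₁⟩,
    ⟨-2, by simp [Dtil], by simp⟩, ⟨-1 + tau μ, by simp [Dtil], by simp⟩,
    ⟨_, by simp [Dtil], h₄⟩, ⟨-1 - tau μ, by simp [Dtil], by simp⟩, ⟨-1, by simp [Dtil], by simp⟩⟩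

lemma exists_mem_Dtil_eq_add_tau_sq_mul (j₁ j₂ : ℕ) {α : Rg μ} (hα : ¬ tau μ ∣ α) :
    ∃ d ∈ Dtil μ j₁ j₂, ∃ β, α = d + tau μ ^ 2 * β := by
  obtain ⟨a, b, c, d, rfl⟩ := exists_coords α
  have ha : ¬ 4 ∣ a := by
    rintro ⟨k, rfl⟩
    refine hα (dvd_add (dvd_add (dvd_add ?_ (dvd_mul_left _ _)) ?_) ?_)
    · push_cast
      exact dvd_mul_of_dvd_left (tau_dvd_four μ) _
    · exact dvd_mul_of_dvd_right (dvd_pow_self _ two_ne_zero) _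
    · exact dvd_mul_of_dvd_right (dvd_pow_self _ three_ne_zero) _
  obtain ⟨p, hp, h₁, h₂⟩ := exists_mem_basePairs (b := b) ha
  obtain ⟨e, he, hpe⟩ := forall_mem_basePairs_exists_mem_Dtil hμ j₁ j₂ p hp
  obtain ⟨γ, hγ⟩ := dvd_add (tau_sq_dvd_of_four_dvd_of_eight_dvd hμ h₁ (by omega)) hpe
  refine ⟨e, he, γ + c + d * tau μ, ?_⟩
  push_cast at hγ
  linear_combination hγ

end

def HasNAFReduction (μ : ℤ) (j₁ j₂ : ℕ) (α : Rg μ) : Prop :=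
  ∃ (ℓ : ℕ) (c : ℕ → Rg μ) (β : Rg μ),
    (∀ i < ℓ, c i ∈ Dtil μ j₁ j₂) ∧
    (∀ i, i + 1 < ℓ → c i = 0 ∨ c (i + 1) = 0) ∧
    Q μ β ≤ 20 ∧
    α = (∑ i ∈ Finset.range ℓ, c i * tau μ ^ i) + tau μ ^ ℓ * β

namespace HasNAFReduction

variable {j₁ j₂ : ℕ} {α β : Rg μ}

lemma of_Q_le (h : Q μ α ≤ 20) : HasNAFReduction μ j₁ j₂ α :=
  ⟨0, fun _ => 0, α, by simp, by simp, h, by simp⟩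

lemma tau_mul (h : HasNAFReduction μ j₁ j₂ β) : HasNAFReduction μ j₁ j₂ (tau μ * β) := by
  obtain ⟨ℓ, c, γ, hc, hnaf, hγ, rfl⟩ := h
  refine ⟨ℓ + 1, fun | 0 => 0 | i + 1 => c i, γ, ?_, ?_, hγ, ?_⟩
  · rintro (_ | i) hi
    exacts [by simp [Dtil], hc i (by omega)]
  · rintro (_ | i) hi
    exacts [Or.inl rfl, hnaf i (by omega)]
  · simp [Finset.sum_range_succ', pow_succ', Finset.mul_sum, mul_add, mul_left_comm, mul_assoc]

lemma add_tau_sq_mul {d : Rg μ} (hd : d ∈ Dtil μ j₁ j₂) (h : HasNAFReduction μ j₁ j₂ β) :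
    HasNAFReduction μ j₁ j₂ (d + tau μ ^ 2 * β) := by
  obtain ⟨ℓ, c, γ, hc, hnaf, hγ, rfl⟩ := h
  refine ⟨ℓ + 2, fun | 0 => d | 1 => 0 | i + 2 => c i, γ, ?_, ?_, hγ, ?_⟩
  · rintro (_ | _ | i) hi
    exacts [hd, by simp [Dtil], hc i (by omega)]
  · rintro (_ | _ | i) hi
    exacts [Or.inr rfl, Or.inl rfl, hnaf i (by omega)]
  · simp only [Finset.sum_range_succ', pow_succ', pow_zero, mul_one, mul_add, Finset.mul_sum,
      mul_left_comm, mul_assoc, mul_zero, add_zero]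
    ring

end HasNAFReduction

theorem hasNAFReduction (hμ : μ = 1 ∨ μ = -1) (j₁ j₂ : ℕ) (α : Rg μ) :
    HasNAFReduction μ j₁ j₂ α := by
  obtain ⟨n, hn⟩ := exists_nat_eq_two_mul_Q hμ α
  induction n using Nat.strong_induction_on generalizing α with
  | _ n ih =>
  by_cases hQ : Q μ α ≤ 20
  · exact .of_Q_le hQ
  rw [not_le] at hQ
  have descend : ∀ β, Q μ β < Q μ α → HasNAFReduction μ j₁ j₂ β := fun β hβ => by
    obtain ⟨m, hm⟩ := exists_nat_eq_two_mul_Q hμ β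
    exact ih m (by exact_mod_cast (show (m : ℝ) < n by linarith)) β hm
  by_cases hτ : tau μ ∣ α
  · obtain ⟨β, rfl⟩ := hτ
    rw [Q_tau_mul hμ] at hQ
    exact (descend β (by rw [Q_tau_mul hμ]; linarith)).tau_mul
  · obtain ⟨d, hd, β, rfl⟩ := exists_mem_Dtil_eq_add_tau_sq_mul hμ j₁ j₂ hτ
    have hβ := Q_lt_Q_add_tau_sq_mul hμ (Q_le_twenty_of_mem_Dtil hμ hd) hQ
    exact (descend β hβ).add_tau_sq_mul hd

theorem stmt16_general (μ : ℤ) (hμ : μ = 1 ∨ μ = -1) (j₁ j₂ : ℕ)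
    (α : Rg μ) :
    ∃ (ℓ : ℕ) (c : ℕ → Rg μ) (β : Rg μ),
      (∀ i < ℓ, c i ∈ Dtil μ j₁ j₂) ∧
      (∀ i, i + 1 < ℓ → c i = 0 ∨ c (i + 1) = 0) ∧
      Q μ β ≤ 20 ∧
      α = (∑ i ∈ Finset.range ℓ, c i * tau μ ^ i) + tau μ ^ ℓ * β :=
  hasNAFReduction hμ j₁ j₂ α

/-- Reduction for the τ-NAF: for every digit set `D̃(j₁,j₂)`, every `α ∈ R` can be
written as `Σ_{i<ℓ} c_i·τ^i + τ^ℓ·β` with NAF digits (among any two consecutive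
digits at least one is zero) and a remainder `β` with `Q(β) ≤ 20`. -/
theorem stmt16 (μ : ℤ) (hμ : μ = 1 ∨ μ = -1) (j₁ j₂ : ℕ) (hj₁ : j₁ < 4) (hj₂ : j₂ < 4)
    (α : Rg μ) :
    ∃ (ℓ : ℕ) (c : ℕ → Rg μ) (β : Rg μ),
      (∀ i < ℓ, c i ∈ Dtil μ j₁ j₂) ∧
      (∀ i, i + 1 < ℓ → c i = 0 ∨ c (i + 1) = 0) ∧
      Q μ β ≤ 20 ∧
      α = (∑ i ∈ Finset.range ℓ, c i * tau μ ^ i) + tau μ ^ ℓ * β :=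
  stmt16_general μ hμ j₁ j₂ α
end

section
/- For every j₁, j₂ ∈ {0,1,2,3}, every digit c ∈ D̃(j₁,j₂), and all α, β ∈ R: if α = c + τ²·β in R and Q(α) > 20, then Q(β) < Q(α). -/
open Polynomial

/-!
Over ℝ, `P = (X² - b₊X + 2)(X² - b₋X + 2)` with `b± = (μ ± √17)/2` and `b±² < 8`, so every complex
root `z` of `P` has `|z|² = 2`; hence `Q (τ² β) = 4 Q β`. Since the roots sum to `μ`,
`Q (m + nτ) = 2m² + μmn + 4n²`, which is at most `20` on every digit. As `Q` is a sum of squared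
absolute values, `4 Q β = Q (α - c) ≤ 2 Q α + 2 Q c ≤ 2 Q α + 40 < 4 Q α`.
-/

lemma Complex.normSq_eq_of_sq_sub_mul_add_eq_zero {z : ℂ} {b c : ℝ} (hdisc : b ^ 2 < 4 * c)
    (hz : z ^ 2 - b * z + c = 0) : Complex.normSq z = c := by
  have hre : z.re ^ 2 - z.im ^ 2 - b * z.re + c = 0 := by
    simpa [sq] using congrArg Complex.re hz
  have him : z.im * (2 * z.re - b) = 0 := by
    have := congrArg Complex.im hz
    simp only [sq, Complex.sub_im, Complex.add_im, Complex.mul_im, Complex.ofReal_re,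
      Complex.ofReal_im, Complex.zero_im] at this
    linear_combination this
  rcases mul_eq_zero.mp him with hy | hx
  · nlinarith [sq_nonneg (2 * z.re - b)]
  · rw [Complex.normSq_apply]
    linear_combination -hre + z.re * hx

section

variable (μ : ℤ)

lemma P_monic : (P μ).Monic := by unfold P; monicity!

lemma natDegree_P : (P μ).natDegree = 4 := by unfold P; compute_degree!

lemma nextCoeff_P : (P μ).nextCoeff = -μ := by
  rw [nextCoeff_of_natDegree_pos (by rw [natDegree_P]; norm_num), natDegree_P]
  simp only [P, coeff_add, coeff_sub, coeff_X_pow, coeff_C_mul, coeff_X]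
  norm_num

noncomputable def complexRoots : Multiset ℂ := ((P μ).map (Int.castRingHom ℂ)).roots

lemma card_complexRoots : Multiset.card (complexRoots μ) = 4 := by
  rw [complexRoots, IsAlgClosed.card_roots_map_eq_natDegree_of_injective _
    (RingHom.injective_int _), natDegree_P]

lemma sum_complexRoots : (complexRoots μ).sum = μ := by
  have := (IsAlgClosed.splits ((P μ).map (Int.castRingHom ℂ)))
    |>.nextCoeff_eq_neg_sum_roots_of_monic ((P_monic μ).map _)
  rw [nextCoeff_map (RingHom.injective_int _), nextCoeff_P] at this
  rw [complexRoots]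
  simpa using this.symm

variable {μ}

lemma eval₂_P_of_mem_complexRoots {z : ℂ} (hz : z ∈ complexRoots μ) :
    (P μ).eval₂ (Int.castRingHom ℂ) z = 0 := by
  rw [← eval_map]
  exact (mem_roots'.mp hz).2

lemma normSq_of_mem_complexRoots (hμ : μ = 1 ∨ μ = -1) {z : ℂ} (hz : z ∈ complexRoots μ) :
    Complex.normSq z = 2 := by
  have hP : z ^ 4 - μ * z ^ 3 - 2 * μ * z + 4 = 0 := by
    have := eval₂_P_of_mem_complexRoots hz
    simp only [P, eval₂_add, eval₂_sub, eval₂_mul, eval₂_pow, eval₂_X, eval₂_C,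
      eval₂_ofNat] at this
    simpa using this
  set s := √17
  have hs : s ^ 2 = 17 := Real.sq_sqrt (by norm_num)
  have hμ2 : (μ : ℝ) ^ 2 = 1 := by rcases hμ with rfl | rfl <;> norm_num
  have hμs : ((μ : ℝ) * s) ^ 2 = 17 := by rw [mul_pow, hμ2, hs, one_mul]
  have hfactor :
      (z ^ 2 - ((μ + s) / 2 : ℝ) * z + 2) * (z ^ 2 - ((μ - s) / 2 : ℝ) * z + 2) = 0 := by
    have hμ2' : (μ : ℂ) ^ 2 = 1 := by exact_mod_cast hμ2
    have hs' : (s : ℂ) ^ 2 = 17 := by exact_mod_cast hs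
    push_cast
    linear_combination hP + z ^ 2 / 4 * hμ2' - z ^ 2 / 4 * hs'
  rcases mul_eq_zero.mp hfactor with h | h <;>
    refine Complex.normSq_eq_of_sq_sub_mul_add_eq_zero ?_ (by exact_mod_cast h) <;>
    nlinarith

end

lemma norm_sub_sq_le {E : Type*} [SeminormedAddGroup E] (a b : E) :
    ‖a - b‖ ^ 2 ≤ 2 * ‖a‖ ^ 2 + 2 * ‖b‖ ^ 2 := by
  calc ‖a - b‖ ^ 2 ≤ (‖a‖ + ‖b‖) ^ 2 := by gcongr; exact norm_sub_le a b
    _ ≤ 2 * ‖a‖ ^ 2 + 2 * ‖b‖ ^ 2 := by linarith [add_sq_le (a := ‖a‖) (b := ‖b‖)]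

section

variable {μ : ℤ}

noncomputable def embedding (z : {z // z ∈ complexRoots μ}) : Rg μ →+* ℂ :=
  AdjoinRoot.lift (Int.castRingHom ℂ) z.1 (eval₂_P_of_mem_complexRoots z.2)

lemma embedding_tau (z : {z // z ∈ complexRoots μ}) : embedding z (tau μ) = z :=
  AdjoinRoot.lift_root _

lemma Q_eq_sum (α : Rg μ) :
    Q μ α = 1 / 2 * ((complexRoots μ).attach.map fun z => ‖embedding z α‖ ^ 2).sum :=
  rfl

lemma Q_sub_le (a b : Rg μ) : Q μ (a - b) ≤ 2 * Q μ a + 2 * Q μ b := by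
  have h := Multiset.sum_map_le_sum_map (fun z => ‖embedding z (a - b)‖ ^ 2)
    (fun z => 2 * ‖embedding z a‖ ^ 2 + 2 * ‖embedding z b‖ ^ 2)
    fun z (_ : z ∈ (complexRoots μ).attach) => by rw [map_sub]; exact norm_sub_sq_le _ _
  simp only [Q_eq_sum, Multiset.sum_map_add, Multiset.sum_map_mul_left] at h ⊢
  linarith

lemma Q_tau_sq_mul (hμ : μ = 1 ∨ μ = -1) (β : Rg μ) : Q μ (tau μ ^ 2 * β) = 4 * Q μ β := by
  have h (z : {z // z ∈ complexRoots μ}) :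
      ‖embedding z (tau μ ^ 2 * β)‖ ^ 2 = 4 * ‖embedding z β‖ ^ 2 := by
    have hz : ‖(z : ℂ)‖ ^ 2 = 2 := by rw [Complex.sq_norm, normSq_of_mem_complexRoots hμ z.2]
    rw [map_mul, map_pow, embedding_tau, norm_mul, norm_pow, mul_pow, hz]
    norm_num
  simp only [Q_eq_sum, h, Multiset.sum_map_mul_left]
  ring

lemma Q_intCast_add_intCast_mul_tau (hμ : μ = 1 ∨ μ = -1) (m n : ℤ) :
    Q μ (m + n * tau μ) = 2 * m ^ 2 + μ * m * n + 4 * n ^ 2 := by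
  have h (z : {z // z ∈ complexRoots μ}) :
      ‖embedding z (m + n * tau μ)‖ ^ 2 = (m ^ 2 + 2 * n ^ 2 : ℝ) + 2 * m * n * (z : ℂ).re := by
    rw [map_add, map_mul, map_intCast, map_intCast, embedding_tau, Complex.sq_norm,
      Complex.normSq_add, Complex.normSq_mul, normSq_of_mem_complexRoots hμ z.2]
    simp only [Complex.normSq_intCast, map_mul, map_intCast, Complex.mul_re, Complex.intCast_re,
      Complex.conj_re, Complex.intCast_im, Complex.conj_im, mul_neg, zero_mul, neg_zero, sub_zero,
      Complex.mul_im, add_zero]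
    ring
  have hre : ((complexRoots μ).map Complex.re).sum = μ := by
    simpa [sum_complexRoots] using (map_multiset_sum Complex.reAddGroupHom (complexRoots μ)).symm
  simp only [Q_eq_sum, h]
  rw [Multiset.attach_map_val' _ fun z : ℂ => (m ^ 2 + 2 * n ^ 2 : ℝ) + 2 * m * n * z.re]
  simp only [Multiset.sum_map_add, Multiset.sum_map_mul_left, Multiset.map_const',
    Multiset.sum_replicate, card_complexRoots, hre]
  simp only [one_div, smul_add, nsmul_eq_mul, Nat.cast_ofNat]
  ring

end

lemma neg_one_pow_eq_intCast (R : Type*) [Ring R] (k : ℕ) :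
    ∃ s : ℤ, (s = 1 ∨ s = -1) ∧ (-1 : R) ^ k = s :=
  ⟨(-1) ^ k, neg_one_pow_eq_or ℤ k, by push_cast; rfl⟩

lemma exists_eq_intCast_add_intCast_mul_tau_of_mem_Dtil {μ : ℤ} (hμ : μ = 1 ∨ μ = -1)
    {j₁ j₂ : ℕ} {c : Rg μ} (hc : c ∈ Dtil μ j₁ j₂) :
    ∃ m n : ℤ, c = m + n * tau μ ∧ 2 * m ^ 2 + μ * m * n + 4 * n ^ 2 ≤ 20 := by
  obtain ⟨s₁, hs₁, e₁⟩ := neg_one_pow_eq_intCast (Rg μ) (j₁ / 2)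
  obtain ⟨s₂, hs₂, e₂⟩ := neg_one_pow_eq_intCast (Rg μ) j₁
  obtain ⟨s₃, hs₃, e₃⟩ := neg_one_pow_eq_intCast (Rg μ) (j₂ / 2)
  obtain ⟨s₄, hs₄, e₄⟩ := neg_one_pow_eq_intCast (Rg μ) j₂
  simp only [Dtil, Set.mem_insert_iff, Set.mem_singleton_iff, e₁, e₂, e₃, e₄] at hc
  rcases hc with rfl | rfl | rfl | rfl | rfl | rfl | rfl | rfl | rfl | rfl | rfl | rfl | rfl
  · exact ⟨0, 0, by simp, by norm_num⟩
  · exact ⟨1, 0, by simp, by norm_num⟩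
  · exact ⟨-1, 0, by simp, by norm_num⟩
  · exact ⟨2, 0, by simp, by norm_num⟩
  · exact ⟨-2, 0, by simp, by norm_num⟩
  · exact ⟨1, 1, by push_cast; ring, by rcases hμ with rfl | rfl <;> norm_num⟩
  · exact ⟨1, -1, by push_cast; ring, by rcases hμ with rfl | rfl <;> norm_num⟩
  · exact ⟨-1, 1, by push_cast; ring, by rcases hμ with rfl | rfl <;> norm_num⟩
  · exact ⟨-1, -1, by push_cast; ring, by rcases hμ with rfl | rfl <;> norm_num⟩
  · exact ⟨2 * s₁, s₁, by push_cast; ring,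
      by rcases hμ with rfl | rfl <;> rcases hs₁ with rfl | rfl <;> norm_num⟩
  · exact ⟨2 * s₂, -s₂, by push_cast; ring,
      by rcases hμ with rfl | rfl <;> rcases hs₂ with rfl | rfl <;> norm_num⟩
  · exact ⟨1, 2 * μ * s₃, by push_cast; ring,
      by rcases hμ with rfl | rfl <;> rcases hs₃ with rfl | rfl <;> norm_num⟩
  · exact ⟨-1, 2 * μ * s₄, by push_cast; ring,
      by rcases hμ with rfl | rfl <;> rcases hs₄ with rfl | rfl <;> norm_num⟩

lemma Q_le_of_mem_Dtil {μ : ℤ} (hμ : μ = 1 ∨ μ = -1) {j₁ j₂ : ℕ} {c : Rg μ}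
    (hc : c ∈ Dtil μ j₁ j₂) : Q μ c ≤ 20 := by
  obtain ⟨m, n, rfl, hmn⟩ := exists_eq_intCast_add_intCast_mul_tau_of_mem_Dtil hμ hc
  rw [Q_intCast_add_intCast_mul_tau hμ]
  exact_mod_cast hmn

theorem stmt17_general (μ : ℤ) (hμ : μ = 1 ∨ μ = -1) (j₁ j₂ : ℕ)
    (c : Rg μ) (hc : c ∈ Dtil μ j₁ j₂) (α β : Rg μ)
    (h : α = c + tau μ ^ 2 * β) (hQ : Q μ α > 20) :
    Q μ β < Q μ α := by
  have hβ : 4 * Q μ β = Q μ (α - c) := by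
    rw [← Q_tau_sq_mul hμ, h, add_sub_cancel_left]
  have hsub := Q_sub_le α c
  have hc20 := Q_le_of_mem_Dtil hμ hc
  linarith

/-- Norm decrease step for the τ-NAF: if `α = c + τ²·β` with `c ∈ D̃(j₁,j₂)` and
`Q(α) > 20`, then `Q(β) < Q(α)`. -/
theorem stmt17 (μ : ℤ) (hμ : μ = 1 ∨ μ = -1) (j₁ j₂ : ℕ) (hj₁ : j₁ < 4) (hj₂ : j₂ < 4)
    (c : Rg μ) (hc : c ∈ Dtil μ j₁ j₂) (α β : Rg μ)
    (h : α = c + tau μ ^ 2 * β) (hQ : Q μ α > 20) :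
    Q μ β < Q μ α :=
  stmt17_general μ hμ j₁ j₂ c hc α β h hQ
end
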